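/- There exists a unitary operator U₁ from H²_anti onto ℓ²(ℕ; E) such that U₁ T_p = S U₁, where E is the closed linear span in H²_anti of {a_p : p ∈ ⟦n⟧ with last coordinate p_d = 0}, ℓ²(ℕ; E) is the space of square-summable E-valued sequences (the vector-valued Hardy space H²_E(𝔻)), and S is the unilateral shift on ℓ²(ℕ; E) given by S(x_0, x_1, x_2, …) = (0, x_0, x_1, …). In particular, T_p on H²_anti is unitarily equivalent to a unilateral shift of infinite multiplicity. -/

import Mathlib

/-!
The antisymmetrized monomials `a_m`, `m` strictly decreasing, are pairwise orthogonal with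
`‖a_m‖² = d!`: the monomials `z ^ (m ∘ σ)` are orthonormal characters of the torus, and distinct
strictly decreasing tuples have disjoint `Σ_d`-orbits with trivial stabilisers. Normalised, they
form Hilbert bases of `H²_anti` and of `E`. Since `s_d = z_1 ⋯ z_d`, multiplication by `s_d`
sends `a_m` to `a_(m + 1)`, which lies in `H²_anti` again, so `T_p` permutes the basis of
`H²_anti`. Writing `m = m_d • 1 + m'` with `m'_d = 0` identifies its index set with
`ℕ × {m' : m'_d = 0}`, and `T_p` raises the `ℕ`-coordinate by one: this is the shift on
`ℓ²(ℕ; E)`.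
-/

open MeasureTheory Complex ContinuousLinearMap
open scoped ENNReal

noncomputable section

namespace SymPoly

/-- The `i`-th elementary symmetric polynomial of an `n`-tuple of complex numbers. -/
def esymC (n i : ℕ) (w : Fin n → ℂ) : ℂ :=
  ∑ S ∈ Finset.univ.powersetCard i, ∏ k ∈ S, w k

variable (d : ℕ)

/-- The `d`-torus, parametrized additively; the normalized Haar measure is `volume`. -/
abbrev Pt := Fin d → AddCircle (1 : ℝ)

/-- The coordinates of a point of the `d`-torus, as complex numbers of modulus one. -/
def zv (θ : Pt d) : Fin d → ℂ := fun k => (AddCircle.toCircle (θ k) : ℂ)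

/-- The monomial `z ^ m` (with `m : Fin d → ℤ`) on the `d`-torus. -/
def monom (m : Fin d → ℤ) (θ : Pt d) : ℂ :=
  ((∏ k, (AddCircle.toCircle (θ k)) ^ (m k) : Circle) : ℂ)

/-- The antisymmetrized monomial `a_m = ∑_σ sgn σ • z ^ (m ∘ σ)`. -/
def aFun (m : Fin d → ℤ) (θ : Pt d) : ℂ :=
  ∑ σ : Equiv.Perm (Fin d), ((Equiv.Perm.sign σ : ℤ) : ℂ) * monom d (m ∘ σ) θ

/-- `L²` of the `d`-torus with normalized Haar measure. -/
abbrev L2 := Lp ℂ 2 (volume : Measure (Pt d))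

lemma continuous_monom (m : Fin d → ℤ) : Continuous (monom d m) := by
  have h1 : Continuous fun θ : Pt d => (∏ k, (AddCircle.toCircle (θ k)) ^ (m k) : Circle) := by
    apply continuous_finset_prod
    intro k _
    exact (continuous_zpow (m k)).comp (AddCircle.continuous_toCircle.comp (continuous_apply k))
  have h2 : Continuous ((↑) : Circle → ℂ) := continuous_subtype_val
  exact h2.comp h1

lemma continuous_aFun (m : Fin d → ℤ) : Continuous (aFun d m) :=
  continuous_finset_sum _ fun σ _ => continuous_const.mul (continuous_monom d (m ∘ σ))

lemma memℒp_top_of_continuous {f : Pt d → ℂ} (hf : Continuous f) :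
    MemLp f ⊤ (volume : Measure (Pt d)) :=
  hf.memLp_top_of_hasCompactSupport
    (IsCompact.of_isClosed_subset isCompact_univ (isClosed_tsupport f) (Set.subset_univ _)) _

lemma memℒp_aFun (m : Fin d → ℤ) : MemLp (aFun d m) 2 volume :=
  (memℒp_top_of_continuous d (continuous_aFun d m)).mono_exponent le_top

/-- `a_m` as an element of `L²`. -/
def aLp (m : Fin d → ℤ) : L2 d := (memℒp_aFun d m).toLp _

/-- The action of a permutation on points of the torus. -/
def permAct (σ : Equiv.Perm (Fin d)) (θ : Pt d) : Pt d := fun k => θ (σ k)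

lemma measurePreserving_permAct (σ : Equiv.Perm (Fin d)) :
    MeasurePreserving (permAct d σ) volume volume := by
  have h := MeasureTheory.volume_measurePreserving_piCongrLeft
    (fun _ : Fin d => AddCircle (1 : ℝ)) σ.symm
  have heq : permAct d σ =
      ⇑(MeasurableEquiv.piCongrLeft (fun _ : Fin d => AddCircle (1 : ℝ)) σ.symm) := by
    funext θ k
    conv_rhs => rw [show k = σ.symm (σ k) by simp]
    rw [MeasurableEquiv.piCongrLeft_apply_apply]
    rfl
  rw [heq]
  exact h

/-- Composition with a permutation of the coordinates, as a linear isometry of `L²`. -/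
def compPerm (σ : Equiv.Perm (Fin d)) : L2 d →ₗᵢ[ℂ] L2 d :=
  Lp.compMeasurePreservingₗᵢ ℂ (permAct d σ) (measurePreserving_permAct d σ)

/-- The antisymmetric part of `L²` of the torus, i.e. those `f` with
`f (z_σ) = sgn σ • f z` almost everywhere, for every permutation `σ`. -/
def L2anti : Submodule ℂ (L2 d) where
  carrier := {f | ∀ σ : Equiv.Perm (Fin d),
    compPerm d σ f = (((Equiv.Perm.sign σ : ℤ) : ℂ)) • f}
  add_mem' := by
    intro f g hf hg σ
    simp only [LinearIsometry.map_add, hf σ, hg σ, smul_add]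
  zero_mem' := by
    intro σ
    simp only [LinearIsometry.map_zero, smul_zero]
  smul_mem' := by
    intro c f hf σ
    simp only [LinearIsometry.map_smul, hf σ]
    rw [smul_comm]

lemma isClosed_L2anti : IsClosed (L2anti d : Set (L2 d)) := by
  have : (L2anti d : Set (L2 d)) = ⋂ σ : Equiv.Perm (Fin d),
      {f | compPerm d σ f = (((Equiv.Perm.sign σ : ℤ) : ℂ)) • f} := by
    ext f
    simp only [Set.mem_iInter]
    rfl
  rw [this]
  exact isClosed_iInter fun σ =>
    isClosed_eq (compPerm d σ).continuous (continuous_const_smul _)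

/-- The (boundary-value model of the) Hardy space of the symmetrized polydisk:
the closed span of the antisymmetrized monomials `a_m` with `m` strictly decreasing
and nonnegative. -/
def H2 : Submodule ℂ (L2 d) :=
  (Submodule.span ℂ
    {f : L2 d | ∃ m : Fin d → ℤ, StrictAnti m ∧ (∀ k, 0 ≤ m k) ∧ f = aLp d m}).topologicalClosure

instance : CompleteSpace (H2 d) := by unfold H2; infer_instance

instance : Submodule.HasOrthogonalProjection (H2 d) := by unfold H2; infer_instance

/-- Multiplication by an essentially bounded function, as a continuous linear operator
on an `L²`-space. -/
def mulCLM {α : Type} [MeasurableSpace α] (μ : Measure α) (φ : α → ℂ)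
    (hφ : MemLp φ ⊤ μ) : Lp ℂ 2 μ →L[ℂ] Lp ℂ 2 μ :=
  LinearMap.mkContinuous
    { toFun := fun f => MemLp.toLp (φ • ⇑f) ((Lp.memLp f).smul hφ)
      map_add' := fun f g => by
        rw [← MemLp.toLp_add]
        apply MemLp.toLp_congr
        filter_upwards [Lp.coeFn_add f g] with x hx
        simp only [Pi.smul_apply, Pi.mul_apply, Pi.add_apply, hx, smul_eq_mul, mul_add]
      map_smul' := fun c f => by
        simp only [RingHom.id_apply]
        rw [← MemLp.toLp_const_smul c ((Lp.memLp f).smul hφ)]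
        apply MemLp.toLp_congr
        filter_upwards [Lp.coeFn_smul c f] with x hx
        simp only [Pi.smul_apply, Pi.mul_apply, hx, smul_eq_mul]
        ring }
    (eLpNorm φ ⊤ μ).toReal
    (fun f => by
      simp only [LinearMap.coe_mk, AddHom.coe_mk]
      rw [Lp.norm_toLp]
      have h := eLpNorm_smul_le_eLpNorm_top_mul_eLpNorm 2 (Lp.aestronglyMeasurable f) φ
      calc (eLpNorm (φ • ⇑f) 2 μ).toReal
          ≤ (eLpNorm φ ⊤ μ * eLpNorm (⇑f) 2 μ).toReal := by
            apply ENNReal.toReal_mono _ h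
            exact ENNReal.mul_ne_top hφ.2.ne (Lp.memLp f).2.ne
        _ = (eLpNorm φ ⊤ μ).toReal * ‖f‖ := by
            rw [ENNReal.toReal_mul, Lp.norm_def])

lemma mulCLM_coeFn {α : Type} [MeasurableSpace α] (μ : Measure α) (φ : α → ℂ)
    (hφ : MemLp φ ⊤ μ) (f : Lp ℂ 2 μ) :
    ⇑(mulCLM μ φ hφ f) =ᵐ[μ] fun x => φ x * f x := by
  have h : ⇑(mulCLM μ φ hφ f) =ᵐ[μ] φ • ⇑f :=
    MemLp.coeFn_toLp ((Lp.memLp f).smul hφ)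
  filter_upwards [h] with x hx
  simpa [Pi.smul_apply, smul_eq_mul] using hx

/-- A function on the torus is symmetric if it is invariant, a.e., under every
permutation of the coordinates. -/
def IsSymm (φ : Pt d → ℂ) : Prop :=
  ∀ σ : Equiv.Perm (Fin d), (fun θ => φ (permAct d σ θ)) =ᵐ[volume] φ

/-- The Toeplitz operator with (essentially bounded) symbol `φ`:
compress multiplication by `φ` to the Hardy space. -/
def toep (φ : Pt d → ℂ) (hφ : MemLp φ ⊤ volume) : H2 d →L[ℂ] H2 d :=
  ((H2 d).orthogonalProjectionOnto) ∘L ((mulCLM volume φ hφ) ∘L (H2 d).subtypeL)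

/-- `T` is a Toeplitz operator if it is `T_φ` for some essentially bounded symmetric
symbol `φ`. -/
def IsToeplitz (T : H2 d →L[ℂ] H2 d) : Prop :=
  ∃ (φ : Pt d → ℂ) (hφ : MemLp φ ⊤ volume), IsSymm d φ ∧ T = toep d φ hφ

/-- The elementary symmetric polynomials as functions on the torus. -/
def sFun (i : ℕ) : Pt d → ℂ := fun θ => esymC d i (zv d θ)

lemma continuous_sFun (i : ℕ) : Continuous (sFun d i) := by
  unfold sFun esymC
  apply continuous_finset_sum
  intro S _
  apply continuous_finset_prod
  intro k _
  have h2 : Continuous ((↑) : Circle → ℂ) := continuous_subtype_val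
  exact h2.comp (AddCircle.continuous_toCircle.comp (continuous_apply k))

lemma sMem (i : ℕ) : MemLp (sFun d i) ⊤ volume :=
  memℒp_top_of_continuous d (continuous_sFun d i)

/-- The Toeplitz operators `T_{s_i}` with elementary symmetric polynomial symbols;
`Ts d d` is `T_p`. -/
def Ts (i : ℕ) : H2 d →L[ℂ] H2 d := toep d (sFun d i) (sMem d i)

lemma aLp_mem_H2 (m : Fin d → ℤ) (h1 : StrictAnti m) (h2 : ∀ k, 0 ≤ m k) :
    aLp d m ∈ H2 d :=
  Submodule.le_topologicalClosure _ (Submodule.subset_span ⟨m, h1, h2, rfl⟩)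

open scoped Classical in
/-- `a_m` as an element of the Hardy space (junk value `0` if `m` is not a
strictly decreasing nonnegative tuple). -/
def aH (m : Fin d → ℤ) : H2 d :=
  if h : StrictAnti m ∧ ∀ k, 0 ≤ m k then ⟨aLp d m, aLp_mem_H2 d m h.1 h.2⟩ else 0

/-- The tuple with `1` in the first `j` coordinates and `0` elsewhere. -/
def fj (j : ℕ) : Fin d → ℤ := fun k => if (k : ℕ) < j then 1 else 0


/-- The coefficient space of the symmetrized polydisk: the closed span of the
antisymmetrized monomials `a_m` with `m` strictly decreasing, nonnegative and with
last coordinate zero. -/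
def Ecoef : Submodule ℂ (L2 d) :=
  (Submodule.span ℂ
    {f : L2 d | ∃ m : Fin d → ℤ, StrictAnti m ∧ (∀ k, 0 ≤ m k) ∧
      (∀ k : Fin d, (k : ℕ) = d - 1 → m k = 0) ∧ f = aLp d m}).topologicalClosure


end SymPoly

open scoped InnerProductSpace ComplexConjugate

@[simp]
theorem lp.evalCLM_apply {𝕜 α : Type*} {E : α → Type*} {p : ℝ≥0∞} [NormedRing 𝕜]
    [∀ i, NormedAddCommGroup (E i)] [∀ i, Module 𝕜 (E i)] [∀ i, IsBoundedSMul 𝕜 (E i)]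
    [Fact (1 ≤ p)] (i : α) (f : lp E p) : lp.evalCLM 𝕜 E p i f = f i :=
  rfl

section

variable {𝕜 E F ι κ : Type*} [RCLike 𝕜] [NormedAddCommGroup E] [InnerProductSpace 𝕜 E]
  [NormedAddCommGroup F] [InnerProductSpace 𝕜 F]

theorem eq_zero_of_mem_closure_span_of_inner_eq_zero {S : Set E} {x : E}
    (hx : x ∈ (Submodule.span 𝕜 S).topologicalClosure) (h : ∀ s ∈ S, ⟪s, x⟫_𝕜 = 0) :
    x = 0 := by
  have hspan : Submodule.span 𝕜 S ≤ (𝕜 ∙ x)ᗮ := Submodule.span_le.mpr fun s hs =>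
    Submodule.mem_orthogonal_singleton_iff_inner_left.mpr (h s hs)
  have hx' : x ∈ (𝕜 ∙ x)ᗮ :=
    Submodule.topologicalClosure_minimal _ hspan (Submodule.isClosed_orthogonal _) hx
  exact inner_self_eq_zero.mp (Submodule.mem_orthogonal_singleton_iff_inner_left.mp hx')

theorem orthogonal_span_range_eq_bot {v : ι → E} (h : ∀ x, (∀ i, ⟪v i, x⟫_𝕜 = 0) → x = 0) :
    (Submodule.span 𝕜 (Set.range v))ᗮ = ⊥ :=
  (Submodule.eq_bot_iff _).mpr fun x hx =>
    h x fun i => Submodule.inner_right_of_mem_orthogonal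
      (Submodule.subset_span (Set.mem_range_self i)) hx

namespace HilbertBasis

theorem eq_zero_of_forall_inner_eq_zero (b : HilbertBasis ι 𝕜 E) {x : E}
    (h : ∀ i, ⟪b i, x⟫_𝕜 = 0) : x = 0 :=
  b.repr.map_eq_zero_iff.mp <| lp.ext <| funext fun i => by
    rw [b.repr_apply_apply, h]
    rfl

theorem ext_continuousLinearMap (b : HilbertBasis ι 𝕜 E) {f g : E →L[𝕜] F}
    (h : ∀ i, f (b i) = g (b i)) : f = g :=
  ContinuousLinearMap.ext_on (Submodule.dense_iff_topologicalClosure_eq_top.mpr b.dense_span)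
    (Set.forall_mem_range.mpr h)

theorem repr_trans_repr_symm_apply (b : HilbertBasis ι 𝕜 E) (c : HilbertBasis ι 𝕜 F) (i : ι) :
    b.repr.trans c.repr.symm (b i) = c i := by
  classical
  rw [LinearIsometryEquiv.trans_apply, b.repr_self, ← c.repr_self,
    LinearIsometryEquiv.symm_apply_apply]

theorem orthonormal_lpSingle (α : Type*) [DecidableEq α] (b : HilbertBasis ι 𝕜 E) :
    Orthonormal 𝕜 fun p : α × ι => lp.single (E := fun _ : α => E) 2 p.1 (b p.2) := by
  classical
  rw [orthonormal_iff_ite]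
  rintro ⟨a, i⟩ ⟨a', i'⟩
  rw [lp.inner_single_left]
  by_cases ha : a = a'
  · subst ha
    simp [orthonormal_iff_ite.mp b.orthonormal]
  · simp [ha]

variable [CompleteSpace E]

protected def reindex (b : HilbertBasis ι 𝕜 E) (e : ι ≃ κ) : HilbertBasis κ 𝕜 E :=
  HilbertBasis.mkOfOrthogonalEqBot (b.orthonormal.comp _ e.symm.injective)
    (orthogonal_span_range_eq_bot fun _ hx =>
      b.eq_zero_of_forall_inner_eq_zero fun i => by simpa using hx (e i))

theorem coe_reindex (b : HilbertBasis ι 𝕜 E) (e : ι ≃ κ) : ⇑(b.reindex e) = b ∘ e.symm :=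
  HilbertBasis.coe_mkOfOrthogonalEqBot _ _

protected def lpSingle (b : HilbertBasis ι 𝕜 E) (α : Type*) [DecidableEq α] :
    HilbertBasis (α × ι) 𝕜 (lp (fun _ : α => E) 2) :=
  HilbertBasis.mkOfOrthogonalEqBot (orthonormal_lpSingle α b)
    (orthogonal_span_range_eq_bot fun f hf => lp.ext <| funext fun a =>
      b.eq_zero_of_forall_inner_eq_zero fun i => by
        simpa [lp.inner_single_left] using hf (a, i))

theorem coe_lpSingle (b : HilbertBasis ι 𝕜 E) (α : Type*) [DecidableEq α] :
    ⇑(b.lpSingle α) = fun p => lp.single (E := fun _ : α => E) 2 p.1 (b p.2) :=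
  HilbertBasis.coe_mkOfOrthogonalEqBot _ _

theorem exists_linearIsometryEquiv_lp_shift (b : HilbertBasis ι 𝕜 F) (c : HilbertBasis κ 𝕜 E)
    (e : ι ≃ ℕ × κ) (T : F →L[𝕜] F) (hT : ∀ i, T (b i) = b (e.symm ((e i).1 + 1, (e i).2))) :
    ∃ U : F ≃ₗᵢ[𝕜] lp (fun _ : ℕ => E) 2, ∀ x : F, (U (T x) : ∀ _ : ℕ, E) 0 = 0 ∧
      ∀ n : ℕ, (U (T x) : ∀ _ : ℕ, E) (n + 1) = (U x : ∀ _ : ℕ, E) n := by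
  set U := b.repr.trans ((c.lpSingle ℕ).reindex e.symm).repr.symm
  have hU : ∀ i, U (b i) = lp.single 2 (e i).1 (c (e i).2) := fun i => by
    rw [repr_trans_repr_symm_apply, coe_reindex, coe_lpSingle]
    simp
  let V : F →L[𝕜] lp (fun _ : ℕ => E) 2 := U.toContinuousLinearEquiv.toContinuousLinearMap
  have hzero : (lp.evalCLM 𝕜 _ 2 0).comp (V.comp T) = 0 :=
    b.ext_continuousLinearMap fun i => by simp [V, hT, hU]
  have hsucc : ∀ n, (lp.evalCLM 𝕜 _ 2 (n + 1)).comp (V.comp T) = (lp.evalCLM 𝕜 _ 2 n).comp V :=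
    fun n => b.ext_continuousLinearMap fun i => by simp [V, hT, hU, Pi.single_apply]
  exact ⟨U, fun x => ⟨congr($hzero x), fun n => congr($(hsucc n) x)⟩⟩

end HilbertBasis

end

namespace SymPoly

variable {d : ℕ}

lemma monom_apply (m : Fin d → ℤ) (θ : Pt d) : monom d m θ = ∏ k, fourier (m k) (θ k) := by
  refine (map_prod Circle.coeHom _ _).trans (Finset.prod_congr rfl fun k _ => ?_)
  rw [fourier_apply, AddCircle.toCircle_zsmul]
  rfl

lemma integral_fourier_addCircle_one (n : ℤ) :
    ∫ x : AddCircle (1 : ℝ), fourier n x = if n = 0 then 1 else 0 := by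
  split_ifs with hn
  · simp [hn, Measure.real, AddCircle.measure_univ]
  · exact integral_eq_zero_of_add_right_eq_neg (fourier_add_half_inv_index hn one_pos)

lemma integral_monom (m : Fin d → ℤ) : ∫ θ, monom d m θ = if m = 0 then 1 else 0 := by
  simp_rw [monom_apply]
  rw [integral_fintype_prod_volume_eq_prod (fun k x => fourier (m k) x)]
  simp_rw [integral_fourier_addCircle_one]
  by_cases hm : m = 0
  · simp [hm]
  · obtain ⟨k, hk⟩ := Function.ne_iff.mp hm
    rw [if_neg hm]
    exact Finset.prod_eq_zero (Finset.mem_univ k) (if_neg hk)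

lemma monom_add (m m' : Fin d → ℤ) (θ : Pt d) :
    monom d (m + m') θ = monom d m θ * monom d m' θ := by
  simp [monom_apply, Finset.prod_mul_distrib]

lemma monom_neg (m : Fin d → ℤ) (θ : Pt d) : monom d (-m) θ = conj (monom d m θ) := by
  simp [monom_apply]

lemma memLp_monom (m : Fin d → ℤ) : MemLp (monom d m) 2 volume :=
  (memℒp_top_of_continuous d (continuous_monom d m)).mono_exponent le_top

def monomLp (m : Fin d → ℤ) : L2 d := (memLp_monom m).toLp _

lemma orthonormal_monomLp : Orthonormal ℂ (monomLp (d := d)) := by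
  rw [orthonormal_iff_ite]
  intro m m'
  rw [L2.inner_def]
  calc ∫ θ, ⟪monomLp m θ, monomLp m' θ⟫_ℂ = ∫ θ, monom d (-m + m') θ := by
        refine integral_congr_ae ?_
        filter_upwards [(memLp_monom m).coeFn_toLp, (memLp_monom m').coeFn_toLp] with θ h h'
        simp [monomLp, h, h', monom_add, monom_neg, mul_comm]
    _ = if m = m' then 1 else 0 := by
        simp [integral_monom, neg_add_eq_zero]

lemma aLp_eq_sum (m : Fin d → ℤ) :
    aLp d m = ∑ σ : Equiv.Perm (Fin d), ((Equiv.Perm.sign σ : ℤ) : ℂ) • monomLp (m ∘ σ) := by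
  refine Lp.ext ?_
  have hsmul : ∀ᵐ θ ∂volume, ∀ σ : Equiv.Perm (Fin d),
      (((Equiv.Perm.sign σ : ℤ) : ℂ) • monomLp (m ∘ σ)) θ =
        ((Equiv.Perm.sign σ : ℤ) : ℂ) * monom d (m ∘ σ) θ := by
    refine ae_all_iff.mpr fun σ => ?_
    filter_upwards [Lp.coeFn_smul (((Equiv.Perm.sign σ : ℤ) : ℂ)) (monomLp (m ∘ σ)),
      (memLp_monom (m ∘ σ)).coeFn_toLp] with θ h h'
    rw [h, Pi.smul_apply, smul_eq_mul, monomLp, h']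
  filter_upwards [(memℒp_aFun d m).coeFn_toLp, Lp.coeFn_finsetSum Finset.univ
    fun σ : Equiv.Perm (Fin d) => ((Equiv.Perm.sign σ : ℤ) : ℂ) • monomLp (m ∘ σ), hsmul]
    with θ ha hsum hσ
  rw [aLp, ha, hsum, Finset.sum_apply]
  simp only [hσ]
  rfl

lemma comp_perm_eq_comp_perm_iff {m m' : Fin d → ℤ} (hm : StrictAnti m) (hm' : StrictAnti m')
    {σ τ : Equiv.Perm (Fin d)} : m ∘ σ = m' ∘ τ ↔ m = m' ∧ σ = τ := by
  refine ⟨fun h => ?_, fun ⟨hmm', hστ⟩ => hmm' ▸ hστ ▸ rfl⟩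
  have hcomp : m = m' ∘ (τ * σ⁻¹) := by
    ext k
    simpa using congrFun h (σ⁻¹ k)
  have hid : ⇑(τ * σ⁻¹) = id :=
    StrictMono.eq_id fun a b hab => hm'.lt_iff_gt.mp (by simpa [hcomp] using hm hab)
  have hστ : σ = τ := (mul_inv_eq_one.mp (Equiv.ext (congrFun hid))).symm
  exact ⟨by rw [hcomp, hid]; rfl, hστ⟩

lemma inner_aLp {m m' : Fin d → ℤ} (hm : StrictAnti m) (hm' : StrictAnti m') :
    ⟪aLp d m, aLp d m'⟫_ℂ = if m = m' then (d.factorial : ℂ) else 0 := by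
  simp only [aLp_eq_sum, sum_inner, inner_sum, inner_smul_left, inner_smul_right,
    orthonormal_iff_ite.mp orthonormal_monomLp, comp_perm_eq_comp_perm_iff hm hm']
  split_ifs with h
  · simp [h, ← Int.cast_mul, ← Units.val_mul, Int.units_mul_self, Fintype.card_perm]
  · simp [h]

def normalizedALp (d : ℕ) (m : Fin d → ℤ) : L2 d := (Real.sqrt d.factorial : ℂ)⁻¹ • aLp d m

lemma inner_normalizedALp {m m' : Fin d → ℤ} (hm : StrictAnti m) (hm' : StrictAnti m') :
    ⟪normalizedALp d m, normalizedALp d m'⟫_ℂ = if m = m' then 1 else 0 := by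
  have hfact : (0 : ℝ) < d.factorial := mod_cast d.factorial_pos
  rw [normalizedALp, normalizedALp, inner_smul_left, inner_smul_right, inner_aLp hm hm']
  split_ifs
  · rw [map_inv₀, Complex.conj_ofReal, ← mul_assoc, ← mul_inv, ← Complex.ofReal_mul,
      Real.mul_self_sqrt hfact.le, Complex.ofReal_natCast, inv_mul_cancel₀ (mod_cast hfact.ne')]
  · simp

lemma normalizedALp_mem_closure {S : Set (Fin d → ℤ)} {m : Fin d → ℤ} (hm : m ∈ S) :
    normalizedALp d m ∈ (Submodule.span ℂ (aLp d '' S)).topologicalClosure :=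
  Submodule.smul_mem _ _
    (Submodule.le_topologicalClosure _ (Submodule.subset_span (Set.mem_image_of_mem _ hm)))

section ALpHilbertBasis

variable (S : Set (Fin d → ℤ)) (hS : ∀ m ∈ S, StrictAnti m) (K : Submodule ℂ (L2 d))
  [CompleteSpace K] (hK : K = (Submodule.span ℂ (aLp d '' S)).topologicalClosure)

def aLpHilbertBasis : HilbertBasis S ℂ K :=
  HilbertBasis.mkOfOrthogonalEqBot
    (v := Set.codRestrict (fun m : S => normalizedALp d m) K
      fun m => hK ▸ normalizedALp_mem_closure m.2)
    ((orthonormal_iff_ite.mpr fun m m' => by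
        simpa [Subtype.ext_iff] using inner_normalizedALp (hS m m.2) (hS m' m'.2)).codRestrict K _)
    (orthogonal_span_range_eq_bot fun x hx => by
      refine Submodule.coe_eq_zero.mp
        (eq_zero_of_mem_closure_span_of_inner_eq_zero (by rw [← hK]; exact x.2) ?_)
      rintro _ ⟨m, hm, rfl⟩
      have hsqrt : (Real.sqrt d.factorial : ℂ) ≠ 0 :=
        mod_cast (Real.sqrt_pos.mpr (mod_cast d.factorial_pos)).ne'
      simpa [normalizedALp, inner_smul_left, hsqrt] using hx ⟨m, hm⟩)

lemma coe_aLpHilbertBasis (m : S) : (aLpHilbertBasis S hS K hK m : L2 d) = normalizedALp d m := by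
  simp [aLpHilbertBasis, HilbertBasis.coe_mkOfOrthogonalEqBot]

end ALpHilbertBasis

def decreasingTuples (d : ℕ) : Set (Fin d → ℤ) := {m | StrictAnti m ∧ ∀ k, 0 ≤ m k}

def decreasingTuplesLastZero (d : ℕ) : Set (Fin d → ℤ) :=
  {m | StrictAnti m ∧ (∀ k, 0 ≤ m k) ∧ ∀ k : Fin d, (k : ℕ) = d - 1 → m k = 0}

lemma H2_eq_closure_span :
    H2 d = (Submodule.span ℂ (aLp d '' decreasingTuples d)).topologicalClosure := by
  simp only [H2, decreasingTuples, Set.image, Set.mem_ofPred_eq, and_assoc, eq_comm]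

lemma Ecoef_eq_closure_span :
    Ecoef d = (Submodule.span ℂ (aLp d '' decreasingTuplesLastZero d)).topologicalClosure := by
  simp only [Ecoef, decreasingTuplesLastZero, Set.image, Set.mem_ofPred_eq, and_assoc, eq_comm]

instance : CompleteSpace (Ecoef d) := by rw [Ecoef_eq_closure_span]; infer_instance

def hardyBasis (d : ℕ) : HilbertBasis (decreasingTuples d) ℂ (H2 d) :=
  aLpHilbertBasis _ (fun _ hm => hm.1) _ H2_eq_closure_span

def coefBasis (d : ℕ) : HilbertBasis (decreasingTuplesLastZero d) ℂ (Ecoef d) :=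
  aLpHilbertBasis _ (fun _ hm => hm.1) _ Ecoef_eq_closure_span

lemma add_one_mem_decreasingTuples {m : Fin d → ℤ} (hm : m ∈ decreasingTuples d) :
    m + 1 ∈ decreasingTuples d :=
  ⟨fun _ _ hab => add_lt_add_left (hm.1 hab) 1, fun k => add_nonneg (hm.2 k) zero_le_one⟩

section Height

variable (hd : 0 < d)

def lastIdx : Fin d := ⟨d - 1, Nat.sub_lt hd one_pos⟩

lemma le_lastIdx (k : Fin d) : k ≤ lastIdx hd := Fin.le_def.mpr (Nat.le_sub_one_of_lt k.2)

def heightEquiv : decreasingTuples d ≃ ℕ × decreasingTuplesLastZero d where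
  toFun m := ((m.1 (lastIdx hd)).toNat,
    ⟨fun k => m.1 k - m.1 (lastIdx hd), fun _ _ hab => sub_lt_sub_right (m.2.1 hab) _,
      fun k => sub_nonneg.mpr (m.2.1.antitone (le_lastIdx hd k)),
      fun k hk => by simp [show k = lastIdx hd from Fin.ext hk]⟩)
  invFun p := ⟨fun k => p.2.1 k + p.1, fun _ _ hab => add_lt_add_left (p.2.2.1 hab) _,
    fun k => add_nonneg (p.2.2.2.1 k) (Int.natCast_nonneg _)⟩
  left_inv m := Subtype.ext <| funext fun k => by simp [Int.toNat_of_nonneg (m.2.2 _)]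
  right_inv p := by
    have hlast : p.2.1 (lastIdx hd) = 0 := p.2.2.2.2 _ rfl
    ext k <;> simp [hlast]

lemma heightEquiv_add_one (m : decreasingTuples d) :
    heightEquiv hd ⟨m + 1, add_one_mem_decreasingTuples m.2⟩ =
      ((heightEquiv hd m).1 + 1, (heightEquiv hd m).2) := by
  have hm := m.2.2 (lastIdx hd)
  ext k
  · simp [heightEquiv]
    omega
  · simp [heightEquiv]

end Height

lemma esymC_self (n : ℕ) (w : Fin n → ℂ) : esymC n n w = ∏ k, w k := by
  have h := Finset.powersetCard_self (Finset.univ : Finset (Fin n))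
  rw [Finset.card_univ, Fintype.card_fin] at h
  rw [esymC, h, Finset.sum_singleton]

lemma sFun_self : sFun d d = monom d 1 :=
  funext fun θ => by simp [sFun, esymC_self, zv, monom_apply]

lemma sFun_self_mul_aFun (m : Fin d → ℤ) (θ : Pt d) :
    sFun d d θ * aFun d m θ = aFun d (m + 1) θ := by
  simp only [aFun, Finset.mul_sum, sFun_self, mul_left_comm _ ((Equiv.Perm.sign _ : ℤ) : ℂ),
    ← monom_add]
  congr! 3
  ext k
  simp [add_comm]

lemma mulCLM_sFun_self_aLp (m : Fin d → ℤ) :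
    mulCLM volume (sFun d d) (sMem d d) (aLp d m) = aLp d (m + 1) := by
  refine Lp.ext ?_
  filter_upwards [mulCLM_coeFn volume (sFun d d) (sMem d d) (aLp d m),
    (memℒp_aFun d m).coeFn_toLp, (memℒp_aFun d (m + 1)).coeFn_toLp] with θ hmul h h'
  rw [hmul, aLp, h, aLp, h', sFun_self_mul_aFun]

lemma coe_toep_of_mem {φ : Pt d → ℂ} {hφ : MemLp φ ⊤ volume} {f : H2 d}
    (h : mulCLM volume φ hφ f ∈ H2 d) : (toep d φ hφ f : L2 d) = mulCLM volume φ hφ f :=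
  congrArg Subtype.val ((H2 d).orthogonalProjectionOnto_mem_subspace_eq_self ⟨_, h⟩)

lemma Ts_self_hardyBasis (m : decreasingTuples d) :
    Ts d d (hardyBasis d m) = hardyBasis d ⟨m + 1, add_one_mem_decreasingTuples m.2⟩ := by
  have hmul : mulCLM volume (sFun d d) (sMem d d) (hardyBasis d m) =
      hardyBasis d ⟨m + 1, add_one_mem_decreasingTuples m.2⟩ := by
    simp [hardyBasis, coe_aLpHilbertBasis, normalizedALp, mulCLM_sFun_self_aLp]
  exact Subtype.ext ((coe_toep_of_mem (hmul ▸ Submodule.coe_mem _)).trans hmul)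

/-- **Lemma 2.5**: `T_p` on `H²_anti` is unitarily equivalent to the unilateral shift
of infinite multiplicity: there is a unitary `U₁` from `H²_anti` onto
`ℓ²(ℕ; E) ≅ H²_E(𝔻)` (with `E` the coefficient space) with `U₁ T_p = S U₁`,
where `S` is the shift `(x_0, x_1, …) ↦ (0, x_0, x_1, …)`. -/
theorem stmt14 (d : ℕ) (hd : 2 ≤ d) :
    ∃ U : ↥(H2 d) ≃ₗᵢ[ℂ] lp (fun _ : ℕ => ↥(Ecoef d)) 2,
      ∀ f : ↥(H2 d),
        ((U ((Ts d d) f) : ∀ _ : ℕ, ↥(Ecoef d)) 0 = 0 ∧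
          ∀ n : ℕ, (U ((Ts d d) f) : ∀ _ : ℕ, ↥(Ecoef d)) (n + 1) =
            (U f : ∀ _ : ℕ, ↥(Ecoef d)) n) := by
  have hd' : 0 < d := by omega
  refine (hardyBasis d).exists_linearIsometryEquiv_lp_shift (coefBasis d) (heightEquiv hd')
    (Ts d d) fun m => ?_
  rw [Ts_self_hardyBasis, ← heightEquiv_add_one hd', Equiv.symm_apply_apply]

end SymPoly
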